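/- Bound on H: Under the setup assumptions, define H(t_s, t_e) := ∑_{i=1}^l f_i(t_s, x(t_s)) V_i(t_s, t_e) + ∑_{1≤i<j≤l} [f_i, f_j](t_s, x(t_s)) V_{ji}(t_s, t_e), where V_i(t_s, t_e) := ∫_{t_s}^{t_e} ω₁^{p_i} u_i(ω₁θ) dθ and V_{ji}(t_s, t_e) := ∫_{t_s}^{t_e} ω₁^{p_j} u_j(ω₁θ) V_i(t_s, θ) dθ. Then ‖H(t_s, t_e)‖ ≤ 8π² l² L Λ₁ ‖x₀‖ ω₁^{p′−1}. -/

import Mathlib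

open MeasureTheory Real Filter

noncomputable section

/-- The state space `ℝ^n`. -/
abbrev E (n : ℕ) := EuclideanSpace ℝ (Fin n)

/-- Lie derivative `L_{f_a} f_b (t,x) = D_x f_b(t,x) [f_a(t,x)]`. -/
def lieDeriv {n : ℕ} (f : ℕ → ℝ → E n → E n)
    (Df : ℕ → ℝ → E n → (E n →L[ℝ] E n)) (a b : ℕ) (t : ℝ) (x : E n) : E n :=
  Df b t x (f a t x)

/-- Second Lie derivative `L_{f_m} L_{f_j} f_i (t,x) = D_x (L_{f_j} f_i)(t,x) [f_m(t,x)]`. -/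
def lieDeriv2 {n : ℕ} (f : ℕ → ℝ → E n → E n)
    (Df : ℕ → ℝ → E n → (E n →L[ℝ] E n))
    (DLf : ℕ → ℕ → ℝ → E n → (E n →L[ℝ] E n)) (m j i : ℕ) (t : ℝ) (x : E n) : E n :=
  DLf j i t x (f m t x)

/-- Lie bracket `[f_i, f_j] = L_{f_i} f_j − L_{f_j} f_i`. -/
def lieBracket {n : ℕ} (f : ℕ → ℝ → E n → E n)
    (Df : ℕ → ℝ → E n → (E n →L[ℝ] E n)) (i j : ℕ) (t : ℝ) (x : E n) : E n :=
  lieDeriv f Df i j t x - lieDeriv f Df j i t x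

/-- `γ_{ij}(ω) = (ω^{p_i+p_j}/T) ∫₀^T ∫₀^θ u_j(ωθ) u_i(ωτ) dτ dθ`, `T = 2π/ω`. -/
def gammaCoeff (p : ℕ → ℝ) (u : ℕ → ℝ → ℝ) (i j : ℕ) (ω : ℝ) : ℝ :=
  ω ^ (p i + p j) / (2 * π / ω) *
    ∫ θ in (0:ℝ)..(2 * π / ω), ∫ τ in (0:ℝ)..θ, u j (ω * θ) * u i (ω * τ)

/-- Regularity of a time-dependent vector field: continuous in the first argument,
globally uniformly `L`-Lipschitz in the second argument, and vanishing at `x = 0`. -/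
def RegVF {n : ℕ} (L : ℝ) (g : ℝ → E n → E n) : Prop :=
  (∀ x, Continuous fun t => g t x) ∧
  (∀ t x y, ‖g t x - g t y‖ ≤ L * ‖x - y‖) ∧
  (∀ t, g t 0 = 0)

/-- Standing assumptions: dither assumptions and vector-field assumptions. -/
structure Hyps {n : ℕ} (l : ℕ)
    (f : ℕ → ℝ → E n → E n)
    (Df : ℕ → ℝ → E n → (E n →L[ℝ] E n))
    (ft : ℕ → ℝ → E n → E n)
    (Lft : ℕ → ℕ → ℝ → E n → E n)
    (DLf : ℕ → ℕ → ℝ → E n → (E n →L[ℝ] E n))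
    (u : ℕ → ℝ → ℝ) (p : ℕ → ℝ) (L : ℝ) : Prop where
  hp0 : p 0 = 0
  hu0 : ∀ t, u 0 t = 1
  hp : ∀ i, 1 ≤ i → i ≤ l → p i ∈ Set.Ioo (0:ℝ) 1
  humeas : ∀ i, i ≤ l → Measurable (u i)
  hubdd : ∀ i, i ≤ l → ∀ t, |u i t| ≤ 1
  huper : ∀ i, i ≤ l → ∀ t, u i (t + 2 * π) = u i t
  huzm : ∀ i, 1 ≤ i → i ≤ l → (∫ t in (0:ℝ)..(2 * π), u i t) = 0
  hLpos : 0 < L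
  hDf : ∀ i, i ≤ l → ∀ t x, HasFDerivAt (f i t) (Df i t x) x
  hft : ∀ i, i ≤ l → ∀ x t, HasDerivAt (fun s => f i s x) (ft i t x) t
  hLft : ∀ i j, i ≤ l → j ≤ l → ∀ x t,
    HasDerivAt (fun s => lieDeriv f Df j i s x) (Lft j i t x) t
  hDLf : ∀ i j, i ≤ l → j ≤ l → ∀ t x,
    HasFDerivAt (fun y => lieDeriv f Df j i t y) (DLf j i t x) x
  hreg_f : ∀ i, i ≤ l → RegVF L (f i)
  hreg_ft : ∀ i, i ≤ l → RegVF L (ft i)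
  hreg_Lf : ∀ i j, i ≤ l → j ≤ l → RegVF L (lieDeriv f Df j i)
  hreg_Lft : ∀ i j, i ≤ l → j ≤ l → RegVF L (Lft j i)
  hreg_LLf : ∀ i j m, i ≤ l → j ≤ l → m ≤ l → RegVF L (lieDeriv2 f Df DLf m j i)

/-- The interaction condition on the powers `p_i` and the Lie brackets. -/
def InteractionCondition {n : ℕ} (l : ℕ) (f : ℕ → ℝ → E n → E n)
    (Df : ℕ → ℝ → E n → (E n →L[ℝ] E n)) (u : ℕ → ℝ → ℝ) (p : ℕ → ℝ) : Prop :=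
  ∀ i j, 1 ≤ i → i ≤ l → 1 ≤ j → j ≤ l → 1 < p i + p j →
    (∀ ω : ℝ, 0 < ω → gammaCoeff p u i j ω = 0) ∨
    (∀ (t : ℝ) (x : E n), lieBracket f Df i j t x = 0)

/-- `x` is a (Carathéodory, i.e. integral-form) solution of the input-affine system (S)
with dither frequency `ω` on the set `s`, with initial time `t₀`. -/
def IsSSol {n : ℕ} (l : ℕ) (f : ℕ → ℝ → E n → E n) (u : ℕ → ℝ → ℝ) (p : ℕ → ℝ)
    (ω : ℝ) (x : ℝ → E n) (s : Set ℝ) (t₀ : ℝ) : Prop :=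
  ContinuousOn x s ∧
  ∀ t ∈ s, x t = x t₀ + ∫ τ in t₀..t,
    (f 0 τ (x τ) + ∑ i ∈ Finset.Icc 1 l, (ω ^ p i * u i (ω * τ)) • f i τ (x τ))

/-- `x` is a solution of the associated Lie-bracket system (LBS), with coefficients
`ν i j = lim_{ω → ∞} γ_{ij}(ω)`, on the set `s`, with initial time `t₀`. -/
def IsLBSSol {n : ℕ} (l : ℕ) (f : ℕ → ℝ → E n → E n)
    (Df : ℕ → ℝ → E n → (E n →L[ℝ] E n)) (ν : ℕ → ℕ → ℝ)
    (x : ℝ → E n) (s : Set ℝ) (t₀ : ℝ) : Prop :=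
  ContinuousOn x s ∧
  ∀ t ∈ s, x t = x t₀ + ∫ τ in t₀..t,
    (f 0 τ (x τ) + ∑ i ∈ Finset.Icc 1 l, ∑ j ∈ Finset.Ioc i l,
      ν i j • lieBracket f Df i j τ (x τ))

end
noncomputable section

/-- `V_i(t_s, t_e) = ∫_{t_s}^{t_e} ω₁^{p_i} u_i(ω₁ θ) dθ`. -/
def Vi (u : ℕ → ℝ → ℝ) (p : ℕ → ℝ) (ω₁ : ℝ) (i : ℕ) (ts te : ℝ) : ℝ :=
  ∫ θ in ts..te, ω₁ ^ p i * u i (ω₁ * θ)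

/-- `V_{ij}(t_s, t_e) = ∫_{t_s}^{t_e} ω₁^{p_i} u_i(ω₁ θ) V_j(t_s, θ) dθ`. -/
def Vij (u : ℕ → ℝ → ℝ) (p : ℕ → ℝ) (ω₁ : ℝ) (i j : ℕ) (ts te : ℝ) : ℝ :=
  ∫ θ in ts..te, (ω₁ ^ p i * u i (ω₁ * θ)) * Vi u p ω₁ j ts θ

/-- The remainder `R(t_s, t_e)`. -/
def Rrem {n : ℕ} (l : ℕ) (f : ℕ → ℝ → E n → E n)
    (Df : ℕ → ℝ → E n → (E n →L[ℝ] E n))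
    (DLf : ℕ → ℕ → ℝ → E n → (E n →L[ℝ] E n))
    (u : ℕ → ℝ → ℝ) (p : ℕ → ℝ) (ω₁ : ℝ) (x : ℝ → E n) (ts te : ℝ) : E n :=
  ∑ i ∈ Finset.Icc 1 l, ∑ j ∈ Finset.Icc 0 l, ∑ m ∈ Finset.Icc 0 l,
    ω₁ ^ (p i + p j + p m) •
      ∫ θ in ts..te, u i (ω₁ * θ) •
        ∫ τ in ts..θ, u j (ω₁ * τ) •
          ∫ σ in ts..τ, u m (ω₁ * σ) • lieDeriv2 f Df DLf m j i σ (x σ)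

/-- The term `Q_{V1}(t_s, t_e)`. -/
def QV1 {n : ℕ} (l : ℕ) (ft : ℕ → ℝ → E n → E n)
    (u : ℕ → ℝ → ℝ) (p : ℕ → ℝ) (ω₁ : ℝ) (x : ℝ → E n) (ts te : ℝ) : E n :=
  ∑ i ∈ Finset.Icc 1 l, ω₁ ^ p i •
    ∫ θ in ts..te, u i (ω₁ * θ) • ∫ τ in ts..θ, ft i τ (x τ)

/-- The term `Q_{V2}(t_s, t_e)`. -/
def QV2 {n : ℕ} (l : ℕ) (Lft : ℕ → ℕ → ℝ → E n → E n)
    (u : ℕ → ℝ → ℝ) (p : ℕ → ℝ) (ω₁ : ℝ) (x : ℝ → E n) (ts te : ℝ) : E n :=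
  ∑ i ∈ Finset.Ico 1 l, ∑ j ∈ Finset.Icc 0 l,
    ω₁ ^ (p i + p j) •
      ∫ θ in ts..te, u i (ω₁ * θ) •
        ∫ τ in ts..θ, u j (ω₁ * τ) • ∫ σ in ts..τ, Lft j i σ (x σ)

/-- The term `Q_1(t_s, t_e)`. -/
def Q1 {n : ℕ} (l : ℕ) (f : ℕ → ℝ → E n → E n)
    (Df : ℕ → ℝ → E n → (E n →L[ℝ] E n))
    (u : ℕ → ℝ → ℝ) (p : ℕ → ℝ) (ω₁ : ℝ) (x : ℝ → E n) (ts te : ℝ) : E n :=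
  ∑ i ∈ Finset.Icc 1 l, Vij u p ω₁ i 0 ts te • lieDeriv f Df 0 i ts (x ts)

/-- The term `Q_{1T}(t_s, t_e)`. -/
def Q1T {n : ℕ} (l : ℕ) (f : ℕ → ℝ → E n → E n)
    (Df : ℕ → ℝ → E n → (E n →L[ℝ] E n))
    (u : ℕ → ℝ → ℝ) (p : ℕ → ℝ) (ω₁ : ℝ) (x : ℝ → E n) (ts te : ℝ) : E n :=
  (∑ i ∈ Finset.Icc 1 l, ∑ j ∈ Finset.Ioc i l,
    (Vi u p ω₁ i ts te * Vi u p ω₁ j ts te) • lieDeriv f Df j i ts (x ts))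
  + (1/2 : ℝ) • ∑ i ∈ Finset.Icc 1 l,
      ((Vi u p ω₁ i ts te) ^ 2) • lieDeriv f Df i i ts (x ts)

/-- The term `H(t_s, t_e)`. -/
def Hterm {n : ℕ} (l : ℕ) (f : ℕ → ℝ → E n → E n)
    (Df : ℕ → ℝ → E n → (E n →L[ℝ] E n))
    (u : ℕ → ℝ → ℝ) (p : ℕ → ℝ) (ω₁ : ℝ) (x : ℝ → E n) (ts te : ℝ) : E n :=
  (∑ i ∈ Finset.Icc 1 l, Vi u p ω₁ i ts te • f i ts (x ts))
  + ∑ i ∈ Finset.Icc 1 l, ∑ j ∈ Finset.Ioc i l,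
      Vij u p ω₁ j i ts te • lieBracket f Df i j ts (x ts)

/-- The term `I(t_s, t_e)`. -/
def Iterm {n : ℕ} (l : ℕ) (f : ℕ → ℝ → E n → E n)
    (Df : ℕ → ℝ → E n → (E n →L[ℝ] E n))
    (u : ℕ → ℝ → ℝ) (p : ℕ → ℝ) (ω₁ : ℝ) (x : ℝ → E n) (ts te : ℝ) : E n :=
  ∫ θ in ts..te, ∑ i ∈ Finset.Icc 1 l, ∑ j ∈ Finset.Ioc i l,
    gammaCoeff p u i j ω₁ • lieBracket f Df i j θ (x θ)

/-- The term `R_{L1}(t_s, t_e)`. -/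
def RL1 {n : ℕ} (l : ℕ) (f : ℕ → ℝ → E n → E n)
    (Df : ℕ → ℝ → E n → (E n →L[ℝ] E n))
    (u : ℕ → ℝ → ℝ) (p : ℕ → ℝ) (ω₁ : ℝ) (x : ℝ → E n) (ts te : ℝ) : E n :=
  ∑ i ∈ Finset.Icc 1 l, ∑ j ∈ Finset.Ioc i l,
    gammaCoeff p u i j ω₁ •
      ∫ θ in ts..te, (lieBracket f Df i j ts (x ts) - lieBracket f Df i j θ (x θ))

/-- The remainder `R_{T1}(t₀, t₁)`. -/
def RT1 {n : ℕ} (l : ℕ) (f : ℕ → ℝ → E n → E n)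
    (Df : ℕ → ℝ → E n → (E n →L[ℝ] E n))
    (ft : ℕ → ℝ → E n → E n) (Lft : ℕ → ℕ → ℝ → E n → E n)
    (u : ℕ → ℝ → ℝ) (p : ℕ → ℝ) (ω₁ : ℝ) (x : ℝ → E n) (t₀ t₁ : ℝ) : E n :=
  let T₁ : ℝ := 2 * π / ω₁
  let r : ℕ := ⌊(t₁ - t₀) / T₁⌋₊
  let tq : ℕ → ℝ := fun q => t₀ + (q : ℝ) * T₁
  (∑ q ∈ Finset.range r,
      (QV1 l ft u p ω₁ x (tq q) (tq (q+1)) + QV2 l Lft u p ω₁ x (tq q) (tq (q+1))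
        + Q1 l f Df u p ω₁ x (tq q) (tq (q+1)) + RL1 l f Df u p ω₁ x (tq q) (tq (q+1))))
    - Iterm l f Df u p ω₁ x (tq r) t₁
    + QV1 l ft u p ω₁ x (tq r) t₁ + QV2 l Lft u p ω₁ x (tq r) t₁
    + Q1 l f Df u p ω₁ x (tq r) t₁ + Q1T l f Df u p ω₁ x (tq r) t₁
    + Hterm l f Df u p ω₁ x (tq r) t₁

end

/-!
Over a window of at most one period `T₁ = 2π/ω₁`, the dither bound `|u_i| ≤ 1` gives
`|V_i| ≤ ω₁^{p_i} T₁ = 2π ω₁^{p_i - 1}` and `|V_{ji}| ≤ (ω₁^{p_j} T₁)(ω₁^{p_i} T₁) ≤ 4π² ω₁^{p_i - 1}`,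
the last step because `p_j < 1`. Each `f_i` and each bracket `[f_i, f_j]` at `(t_s, x(t_s))` is
bounded by `L Λ₁ ‖x₀‖`, resp. `2 L Λ₁ ‖x₀‖`, so the `l` first-order terms and the `l(l - 1)/2`
bracket terms of `H` add up to at most `8π² l² L Λ₁ ‖x₀‖ ω₁^{p′-1}`.
-/

open Finset

lemma RegVF.norm_le {n : ℕ} {L : ℝ} {g : ℝ → E n → E n} (hg : RegVF L g) (t : ℝ) (y : E n) :
    ‖g t y‖ ≤ L * ‖y‖ := by
  simpa [hg.2.2 t] using hg.2.1 t y 0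

lemma norm_lieBracket_le {n : ℕ} {L : ℝ} {f : ℕ → ℝ → E n → E n}
    {Df : ℕ → ℝ → E n → (E n →L[ℝ] E n)} {i j : ℕ}
    (hij : RegVF L (lieDeriv f Df i j)) (hji : RegVF L (lieDeriv f Df j i)) (t : ℝ) (y : E n) :
    ‖lieBracket f Df i j t y‖ ≤ 2 * (L * ‖y‖) :=
  calc ‖lieBracket f Df i j t y‖
      ≤ ‖lieDeriv f Df i j t y‖ + ‖lieDeriv f Df j i t y‖ := norm_sub_le _ _
    _ ≤ L * ‖y‖ + L * ‖y‖ := add_le_add (hij.norm_le t y) (hji.norm_le t y)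
    _ = 2 * (L * ‖y‖) := by ring

lemma norm_sum_Icc_le {F : Type*} [SeminormedAddCommGroup F] (l : ℕ) (g : ℕ → F) {C : ℝ}
    (hg : ∀ i ∈ Icc 1 l, ‖g i‖ ≤ C) : ‖∑ i ∈ Icc 1 l, g i‖ ≤ l * C := by
  simpa using (norm_sum_le _ _).trans (sum_le_card_nsmul _ _ _ hg)

lemma norm_sum_Icc_sum_Ioc_le {F : Type*} [SeminormedAddCommGroup F] (l : ℕ)
    (g : ℕ → ℕ → F) {C : ℝ} (hC : 0 ≤ C) (hg : ∀ i ∈ Icc 1 l, ∀ j ∈ Ioc i l, ‖g i j‖ ≤ C) :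
    ‖∑ i ∈ Icc 1 l, ∑ j ∈ Ioc i l, g i j‖ ≤ l * ((l - 1) * C) := by
  refine norm_sum_Icc_le l _ fun i hi ↦ ?_
  obtain ⟨hi1, hil⟩ := mem_Icc.1 hi
  calc ‖∑ j ∈ Ioc i l, g i j‖ ≤ #(Ioc i l) • C :=
        (norm_sum_le _ _).trans (sum_le_card_nsmul _ _ _ (hg i hi))
    _ ≤ (l - 1) * C := by
        rw [nsmul_eq_mul, Nat.card_Ioc, Nat.cast_sub hil]
        have : (1 : ℝ) ≤ i := by exact_mod_cast hi1
        gcongr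

lemma rpow_mul_le_of_le_period {ω q r d : ℝ} (hω : 1 ≤ ω) (hqr : q ≤ r) (hd : d ≤ 2 * π / ω) :
    ω ^ q * d ≤ 2 * π * ω ^ (r - 1) := by
  have hω₀ : 0 < ω := zero_lt_one.trans_le hω
  calc ω ^ q * d ≤ ω ^ q * (2 * π / ω) := by gcongr
    _ = 2 * π * ω ^ (q - 1) := by rw [rpow_sub hω₀, rpow_one]; ring
    _ ≤ 2 * π * ω ^ (r - 1) := by gcongr

section Dither

variable {u : ℕ → ℝ → ℝ} {p : ℕ → ℝ} {ω : ℝ} {i j : ℕ}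

lemma abs_Vi_le (hu : ∀ t, |u i t| ≤ 1) (hω : 0 ≤ ω) (ts te : ℝ) :
    |Vi u p ω i ts te| ≤ ω ^ p i * |te - ts| := by
  rw [Vi, ← norm_eq_abs]
  refine intervalIntegral.norm_integral_le_of_norm_le_const fun θ _ ↦ ?_
  rw [norm_mul, norm_of_nonneg (rpow_nonneg hω _)]
  exact mul_le_of_le_one_right (rpow_nonneg hω _) (hu _)

lemma abs_Vij_le (hui : ∀ t, |u i t| ≤ 1) (huj : ∀ t, |u j t| ≤ 1) (hω : 0 ≤ ω) (ts te : ℝ) :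
    |Vij u p ω j i ts te| ≤ ω ^ p j * |te - ts| * (ω ^ p i * |te - ts|) := by
  rw [Vij, ← norm_eq_abs, mul_right_comm]
  refine intervalIntegral.norm_integral_le_of_norm_le_const fun θ hθ ↦ ?_
  rw [norm_mul, norm_mul, norm_of_nonneg (rpow_nonneg hω _), norm_eq_abs]
  have hθ : |θ - ts| ≤ |te - ts| := Set.abs_sub_left_of_mem_uIcc (Set.uIoc_subset_uIcc hθ)
  gcongr
  · exact mul_le_of_le_one_right (rpow_nonneg hω _) (huj _)
  · exact (abs_Vi_le hui hω ts θ).trans (by gcongr)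

variable {ts te r : ℝ}

lemma abs_Vi_le_of_le_period (hu : ∀ t, |u i t| ≤ 1) (hω : 1 ≤ ω) (hpi : p i ≤ r)
    (hlen : |te - ts| ≤ 2 * π / ω) : |Vi u p ω i ts te| ≤ 2 * π * ω ^ (r - 1) :=
  (abs_Vi_le hu (zero_le_one.trans hω) ts te).trans (rpow_mul_le_of_le_period hω hpi hlen)

lemma abs_Vij_le_of_le_period (hui : ∀ t, |u i t| ≤ 1) (huj : ∀ t, |u j t| ≤ 1) (hω : 1 ≤ ω)
    (hpi : p i ≤ r) (hpj : p j ≤ 1) (hlen : |te - ts| ≤ 2 * π / ω) :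
    |Vij u p ω j i ts te| ≤ 2 * π * (2 * π * ω ^ (r - 1)) := by
  have hω₀ : 0 ≤ ω := zero_le_one.trans hω
  have hj : ω ^ p j * |te - ts| ≤ 2 * π := by
    simpa using rpow_mul_le_of_le_period hω hpj hlen
  refine (abs_Vij_le hui huj hω₀ ts te).trans (mul_le_mul hj ?_ (by positivity) (by positivity))
  exact rpow_mul_le_of_le_period hω hpi hlen

end Dither

lemma norm_Hterm_le {n l : ℕ} {f : ℕ → ℝ → E n → E n} {Df : ℕ → ℝ → E n → (E n →L[ℝ] E n)}
    {u : ℕ → ℝ → ℝ} {p : ℕ → ℝ} {ω : ℝ} {x : ℝ → E n} {ts te A B K : ℝ} (hB : 0 ≤ B)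
    (hK : 0 ≤ K) (hV : ∀ i ∈ Icc 1 l, |Vi u p ω i ts te| ≤ A)
    (hVV : ∀ i ∈ Icc 1 l, ∀ j ∈ Ioc i l, |Vij u p ω j i ts te| ≤ B)
    (hf : ∀ i ∈ Icc 1 l, ‖f i ts (x ts)‖ ≤ K)
    (hbr : ∀ i ∈ Icc 1 l, ∀ j ∈ Ioc i l, ‖lieBracket f Df i j ts (x ts)‖ ≤ 2 * K) :
    ‖Hterm l f Df u p ω x ts te‖ ≤ l * (A * K) + l * ((l - 1) * (B * (2 * K))) := by
  refine (norm_add_le _ _).trans (add_le_add ?_ ?_)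
  · refine norm_sum_Icc_le l _ fun i hi ↦ ?_
    rw [norm_smul, norm_eq_abs]
    exact mul_le_mul (hV i hi) (hf i hi) (norm_nonneg _) ((abs_nonneg _).trans (hV i hi))
  · refine norm_sum_Icc_sum_Ioc_le l _ (by positivity) fun i hi j hj ↦ ?_
    rw [norm_smul, norm_eq_abs]
    exact mul_le_mul (hVV i hi j hj) (hbr i hi j hj) (norm_nonneg _) hB

theorem bound_H_general
    {n : ℕ} (l : ℕ)
    (f : ℕ → ℝ → E n → E n)
    (Df : ℕ → ℝ → E n → (E n →L[ℝ] E n))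
    (ft : ℕ → ℝ → E n → E n)
    (Lft : ℕ → ℕ → ℝ → E n → E n)
    (DLf : ℕ → ℕ → ℝ → E n → (E n →L[ℝ] E n))
    (u : ℕ → ℝ → ℝ) (p : ℕ → ℝ) (L : ℝ)
    (hyp : Hyps l f Df ft Lft DLf u p L)
    -- setup: a bounded solution of (S) with frequency `ω₁ ≥ 1` on `[t₀, t₁]`
    (t₀ t₁ ω₁ Λ₁ : ℝ) (x₀ : E n) (x : ℝ → E n)
    (hω₁ : 1 ≤ ω₁)
    (hxb : ∀ t ∈ Set.Icc t₀ t₁, ‖x t‖ ≤ Λ₁ * ‖x₀‖)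
    -- `p′ = max_{1 ≤ i ≤ l} p i`
    (p' : ℝ)
    (hp'ub : ∀ i, 1 ≤ i → i ≤ l → p i ≤ p')
    -- `t_s ∈ [t₀, t_r]` and `t_e ∈ [t_s, min (t_s + T₁) t₁]`, where `T₁ = 2π/ω₁`
    (ts te : ℝ)
    (hts : ts ∈ Set.Icc t₀ (t₀ + (⌊(t₁ - t₀) / (2 * π / ω₁)⌋₊ : ℝ) * (2 * π / ω₁)))
    (hte : te ∈ Set.Icc ts (min (ts + 2 * π / ω₁) t₁)) :
    ‖Hterm l f Df u p ω₁ x ts te‖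
      ≤ 8 * π ^ 2 * l ^ 2 * L * Λ₁ * ‖x₀‖ * ω₁ ^ (p' - 1) := by
  have hlen : |te - ts| ≤ 2 * π / ω₁ := by
    rw [abs_of_nonneg (sub_nonneg.2 hte.1)]
    linarith [hte.2.trans (min_le_left _ _)]
  have hxts : ‖x ts‖ ≤ Λ₁ * ‖x₀‖ :=
    hxb ts ⟨hts.1, hte.1.trans (hte.2.trans (min_le_right _ _))⟩
  have hLx : L * ‖x ts‖ ≤ L * (Λ₁ * ‖x₀‖) := by gcongr; exact hyp.hLpos.le
  have hK : 0 ≤ L * (Λ₁ * ‖x₀‖) := mul_nonneg hyp.hLpos.le ((norm_nonneg _).trans hxts)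
  have hH := norm_Hterm_le (x := x) (Df := Df) (by positivity) hK
    (fun i hi ↦ abs_Vi_le_of_le_period (hyp.hubdd i (mem_Icc.1 hi).2) hω₁
      (hp'ub i (mem_Icc.1 hi).1 (mem_Icc.1 hi).2) hlen)
    (fun i hi j hj ↦ abs_Vij_le_of_le_period (hyp.hubdd i (mem_Icc.1 hi).2)
      (hyp.hubdd j (mem_Ioc.1 hj).2) hω₁ (hp'ub i (mem_Icc.1 hi).1 (mem_Icc.1 hi).2)
      (hyp.hp j ((mem_Icc.1 hi).1.trans (mem_Ioc.1 hj).1.le) (mem_Ioc.1 hj).2).2.le hlen)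
    (fun i hi ↦ ((hyp.hreg_f i (mem_Icc.1 hi).2).norm_le ts _).trans hLx)
    (fun i hi j hj ↦ (norm_lieBracket_le (hyp.hreg_Lf j i (mem_Ioc.1 hj).2 (mem_Icc.1 hi).2)
      (hyp.hreg_Lf i j (mem_Icc.1 hi).2 (mem_Ioc.1 hj).2) ts _).trans (by gcongr))
  have hπ : 2 * π ≤ 8 * π ^ 2 := by nlinarith [pi_gt_three]
  have hlWK : 0 ≤ l * ω₁ ^ (p' - 1) * (L * (Λ₁ * ‖x₀‖)) := by positivity
  nlinarith [mul_nonneg (sub_nonneg.2 hπ) hlWK]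

/-- **Bound on `H`** (Lemma 11). -/
theorem bound_H
    {n : ℕ} (l : ℕ)
    (f : ℕ → ℝ → E n → E n)
    (Df : ℕ → ℝ → E n → (E n →L[ℝ] E n))
    (ft : ℕ → ℝ → E n → E n)
    (Lft : ℕ → ℕ → ℝ → E n → E n)
    (DLf : ℕ → ℕ → ℝ → E n → (E n →L[ℝ] E n))
    (u : ℕ → ℝ → ℝ) (p : ℕ → ℝ) (L : ℝ)
    (hyp : Hyps l f Df ft Lft DLf u p L)
    -- setup: a bounded solution of (S) with frequency `ω₁ ≥ 1` on `[t₀, t₁]`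
    (t₀ t₁ ω₁ Λ₁ : ℝ) (x₀ : E n) (x : ℝ → E n)
    (h01 : t₀ < t₁) (hω₁ : 1 ≤ ω₁) (hΛ₁ : 1 ≤ Λ₁)
    (hx0 : x t₀ = x₀)
    (hsol : IsSSol l f u p ω₁ x (Set.Icc t₀ t₁) t₀)
    (hxb : ∀ t ∈ Set.Icc t₀ t₁, ‖x t‖ ≤ Λ₁ * ‖x₀‖)
    -- `p′ = max_{1 ≤ i ≤ l} p i`
    (p' : ℝ)
    (hp'ub : ∀ i, 1 ≤ i → i ≤ l → p i ≤ p')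
    (hp'mem : ∃ i, 1 ≤ i ∧ i ≤ l ∧ p i = p')
    -- `t_s ∈ [t₀, t_r]` and `t_e ∈ [t_s, min (t_s + T₁) t₁]`, where `T₁ = 2π/ω₁`
    (ts te : ℝ)
    (hts : ts ∈ Set.Icc t₀ (t₀ + (⌊(t₁ - t₀) / (2 * π / ω₁)⌋₊ : ℝ) * (2 * π / ω₁)))
    (hte : te ∈ Set.Icc ts (min (ts + 2 * π / ω₁) t₁)) :
    ‖Hterm l f Df u p ω₁ x ts te‖
      ≤ 8 * π ^ 2 * l ^ 2 * L * Λ₁ * ‖x₀‖ * ω₁ ^ (p' - 1) :=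
  bound_H_general l f Df ft Lft DLf u p L hyp t₀ t₁ ω₁ Λ₁ x₀ x hω₁ hxb p' hp'ub ts te hts hte
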